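/- (Royden's lemma, algebraic form, as used in (3.4) of Proposition 3.3.) Let n ≥ 1 and let R : ℂⁿ × ℂⁿ × ℂⁿ × ℂⁿ → ℂ be a map that is ℂ-linear in the first and third arguments, conjugate-linear in the second and fourth arguments, and satisfies the Kähler curvature symmetries R(ξ, η, ζ, ω) = R(ζ, η, ξ, ω) = R(ξ, ω, ζ, η) together with the reality condition R(ξ, η, ζ, ω) = conj(R(η, ξ, ω, ζ)). Let κ ≥ 0 be a real number and suppose the holomorphic sectional curvature bound R(η, η, η, η) ≤ −κ‖η‖⁴ holds for every η ∈ ℂⁿ (the left side being real by the reality condition, and ‖·‖ the standard Hermitian norm on ℂⁿ). Then for all positive real numbers b_1, …, b_n, writing e_1, …, e_n for the standard basis of ℂⁿ and S = ∑_{i=1}^n 1/b_i, one has −∑_{i,k=1}^n Re R(e_i, e_i, e_k, e_k)/(b_i b_k) ≥ ((n+1)κ/(2n)) · S². -/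

import Mathlib

/-!
Royden's averaging trick. With `s i = 1 / b i`, consider the `4ⁿ` vectors
`x_θ = ∑ i, √(s i) ω_{θ i} e_i`, where every `ω_{θ i}` is a fourth root of unity. Each has
`‖x_θ‖² = S`, and since the phases satisfy `avg (ω_i ω̄_j ω_k ω̄_l) = δ_ij δ_kl + δ_il δ_kj - δ_ijkl`,
the average of `R(x_θ, x_θ, x_θ, x_θ)` is `2 W - ∑ s_i² R(e_i, e_i, e_i, e_i)`, where
`W = ∑_{i,k} s_i s_k R(e_i, e_i, e_k, e_k)`. The curvature bound applied to the `x_θ` and to the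
`e_i`, together with Cauchy–Schwarz `S² ≤ n ∑ s_i²`, gives `-2 W ≥ κ (S² + S² / n)`.
-/

open Finset ComplexConjugate

noncomputable def fourthRoot (t : Fin 4) : ℂ := Complex.I ^ (t : ℕ)

theorem norm_fourthRoot (t : Fin 4) : ‖fourthRoot t‖ = 1 := by
  simp [fourthRoot]

-- Fourth roots suffice because `a - b ∈ [-2, 2]` is a multiple of 4 only when it is 0.
theorem sum_fourthRoot_pow_mul_conj_pow {a b : ℕ} (ha : a ≤ 2) (hb : b ≤ 2) :
    ∑ t, fourthRoot t ^ a * conj (fourthRoot t) ^ b = if a = b then 4 else 0 := by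
  interval_cases a <;> interval_cases b <;>
    norm_num [Fin.sum_univ_four, fourthRoot, Complex.ext_iff, pow_succ]

theorem forall_ite_add_ite_eq_iff {ι : Type*} [DecidableEq ι] {i j k l : ι} :
    (∀ m, (if m = i then 1 else 0) + (if m = k then 1 else 0) =
      ((if m = j then 1 else 0) + (if m = l then 1 else 0) : ℕ)) ↔
      (i = j ∧ k = l) ∨ (i = l ∧ k = j) := by
  refine ⟨fun h => ?_, ?_⟩
  · have hi := h i
    have hk := h k
    grind
  · rintro (⟨rfl, rfl⟩ | ⟨rfl, rfl⟩) m <;> omega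

theorem sum_fourthRoot_moment {ι : Type*} [Fintype ι] [DecidableEq ι] (i j k l : ι) :
    ∑ θ : ι → Fin 4, fourthRoot (θ i) * conj (fourthRoot (θ j)) *
        (fourthRoot (θ k) * conj (fourthRoot (θ l))) =
      if (i = j ∧ k = l) ∨ (i = l ∧ k = j) then 4 ^ Fintype.card ι else 0 := by
  set a : ι → ℕ := fun m => (if m = i then 1 else 0) + (if m = k then 1 else 0)
  set b : ι → ℕ := fun m => (if m = j then 1 else 0) + (if m = l then 1 else 0)
  have hfactor : ∀ θ : ι → Fin 4, fourthRoot (θ i) * conj (fourthRoot (θ j)) *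
      (fourthRoot (θ k) * conj (fourthRoot (θ l))) =
        ∏ m, fourthRoot (θ m) ^ a m * conj (fourthRoot (θ m)) ^ b m := by
    intro θ
    simp only [a, b, pow_add, prod_mul_distrib, pow_ite, pow_one, pow_zero, Fintype.prod_ite_eq']
    ring
  have hle : ∀ m, a m ≤ 2 ∧ b m ≤ 2 := fun m => by simp only [a, b]; split_ifs <;> omega
  rw [sum_congr rfl fun θ _ => hfactor θ,
    ← Fintype.prod_sum fun m t => fourthRoot t ^ a m * conj (fourthRoot t) ^ b m,
    prod_congr rfl fun m _ => sum_fourthRoot_pow_mul_conj_pow (hle m).1 (hle m).2]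
  simp only [Fintype.prod_ite_zero, a, b, forall_ite_add_ite_eq_iff, prod_const, card_univ]

theorem sum_ite_pair_eq_pair {ι M : Type*} [Fintype ι] [DecidableEq ι] [AddCommGroup M]
    (f : ι → ι → ι → ι → M) :
    ∑ i, ∑ j, ∑ k, ∑ l, (if (i = j ∧ k = l) ∨ (i = l ∧ k = j) then f i j k l else 0) =
      ∑ i, ∑ k, f i i k k + ∑ i, ∑ k, f i k k i - ∑ i, f i i i i := by
  have hsplit : ∀ i j k l, (if (i = j ∧ k = l) ∨ (i = l ∧ k = j) then f i j k l else 0) =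
      (if k = l ∧ i = j then f i j k l else 0) + (if i = l ∧ k = j then f i j k l else 0) -
        (if k = l ∧ i = k ∧ i = j then f i j k l else 0) := by
    intro i j k l
    split_ifs <;> grind
  simp [hsplit, sum_add_distrib, sum_sub_distrib, ite_and]

theorem Orthonormal.norm_sq_sum_smul {ι E : Type*} [Fintype ι] [NormedAddCommGroup E]
    [InnerProductSpace ℂ E] {v : ι → E} (hv : Orthonormal ℂ v) (a : ι → ℂ) :
    ‖∑ i, a i • v i‖ ^ 2 = ∑ i, Complex.normSq (a i) := by
  rw [@norm_sq_eq_re_inner ℂ, hv.inner_sum, map_sum]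
  simp [Complex.normSq_apply]

theorem map_sum_smul_of_map_smul_add {ι R E : Type*} [Ring R] [AddCommMonoid E] [Module R E]
    {σ : R →+* R} {f : E → R} (hf : ∀ (a : R) x y, f (a • x + y) = σ a * f x + f y)
    (s : Finset ι) (c : ι → R) (v : ι → E) :
    f (∑ i ∈ s, c i • v i) = ∑ i ∈ s, σ (c i) * f (v i) := by
  have hzero : f 0 = 0 := by simpa using hf 1 0 0
  induction s using Finset.cons_induction with
  | empty => simpa using hzero
  | cons a s ha ih => rw [sum_cons, sum_cons, hf, ih]

section Quartic

variable {ι E : Type*} [Fintype ι] [AddCommGroup E] [Module ℂ E] {R : E → E → E → E → ℂ}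

structure IsSesquiQuadrilinear (R : E → E → E → E → ℂ) : Prop where
  map_smul_add₁ : ∀ (a : ℂ) (ξ ξ' η ζ w), R (a • ξ + ξ') η ζ w = a * R ξ η ζ w + R ξ' η ζ w
  map_smul_add₂ : ∀ (a : ℂ) (ξ η η' ζ w), R ξ (a • η + η') ζ w = conj a * R ξ η ζ w + R ξ η' ζ w
  map_smul_add₃ : ∀ (a : ℂ) (ξ η ζ ζ' w), R ξ η (a • ζ + ζ') w = a * R ξ η ζ w + R ξ η ζ' w
  map_smul_add₄ : ∀ (a : ℂ) (ξ η ζ w w'), R ξ η ζ (a • w + w') = conj a * R ξ η ζ w + R ξ η ζ w'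

theorem IsSesquiQuadrilinear.quartic_sum_smul (hR : IsSesquiQuadrilinear R)
    (c : ι → ℂ) (v : ι → E) :
    R (∑ i, c i • v i) (∑ i, c i • v i) (∑ i, c i • v i) (∑ i, c i • v i) =
      ∑ i, ∑ j, ∑ k, ∑ l, c i * conj (c j) * (c k * conj (c l)) * R (v i) (v j) (v k) (v l) := by
  have h1 := fun η ζ w => map_sum_smul_of_map_smul_add (σ := RingHom.id ℂ)
    (f := fun ξ => R ξ η ζ w) (fun a x y => hR.map_smul_add₁ a x y η ζ w) univ c v
  have h2 := fun ξ ζ w => map_sum_smul_of_map_smul_add (σ := starRingEnd ℂ)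
    (f := fun η => R ξ η ζ w) (fun a x y => hR.map_smul_add₂ a ξ x y ζ w) univ c v
  have h3 := fun ξ η w => map_sum_smul_of_map_smul_add (σ := RingHom.id ℂ)
    (f := fun ζ => R ξ η ζ w) (fun a x y => hR.map_smul_add₃ a ξ η x y w) univ c v
  have h4 := fun ξ η ζ => map_sum_smul_of_map_smul_add (σ := starRingEnd ℂ)
    (f := fun w => R ξ η ζ w) (fun a x y => hR.map_smul_add₄ a ξ η ζ x y) univ c v
  simp only [RingHom.id_apply] at h1 h3
  simp only [h1, h2, h3, h4, mul_sum]
  refine sum_congr rfl fun i _ => sum_congr rfl fun j _ => sum_congr rfl fun k _ =>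
    sum_congr rfl fun l _ => by ring

noncomputable def phaseVector (c : ι → ℂ) (v : ι → E) (θ : ι → Fin 4) : E :=
  ∑ i, (c i * fourthRoot (θ i)) • v i

theorem sum_quartic_phaseVector [DecidableEq ι] (hR : IsSesquiQuadrilinear R)
    (hsym13 : ∀ ξ η ζ w, R ξ η ζ w = R ζ η ξ w) (c : ι → ℂ) (v : ι → E) :
    ∑ θ : ι → Fin 4, R (phaseVector c v θ) (phaseVector c v θ) (phaseVector c v θ)
        (phaseVector c v θ) =
      (4 ^ Fintype.card ι : ℕ) • (2 • ∑ i, ∑ k, (Complex.normSq (c i) * Complex.normSq (c k)) •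
          R (v i) (v i) (v k) (v k) - ∑ i, Complex.normSq (c i) ^ 2 • R (v i) (v i) (v i) (v i)) := by
  set f : ι → ι → ι → ι → ℂ := fun i j k l =>
    c i * conj (c j) * (c k * conj (c l)) * R (v i) (v j) (v k) (v l)
  have hterm : ∀ θ : ι → Fin 4, R (phaseVector c v θ) (phaseVector c v θ) (phaseVector c v θ)
        (phaseVector c v θ) = ∑ i, ∑ j, ∑ k, ∑ l, f i j k l * (fourthRoot (θ i) *
          conj (fourthRoot (θ j)) * (fourthRoot (θ k) * conj (fourthRoot (θ l)))) := by
    intro θ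
    rw [phaseVector, hR.quartic_sum_smul]
    simp only [f, map_mul]
    refine sum_congr rfl fun i _ => sum_congr rfl fun j _ => sum_congr rfl fun k _ =>
      sum_congr rfl fun l _ => by ring
  have hdiag : ∀ i k, f i i k k = (Complex.normSq (c i) * Complex.normSq (c k)) •
      R (v i) (v i) (v k) (v k) := fun i k => by
    simp only [f, Complex.real_smul, Complex.ofReal_mul, ← Complex.mul_conj]
  have hcross : ∀ i k, f k i i k = (Complex.normSq (c i) * Complex.normSq (c k)) •
      R (v i) (v i) (v k) (v k) := fun i k => by
    simp only [f, Complex.real_smul, Complex.ofReal_mul, ← Complex.mul_conj, hsym13 (v k)]; ring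
  have hquad : ∀ i, f i i i i = Complex.normSq (c i) ^ 2 • R (v i) (v i) (v i) (v i) := fun i => by
    simp only [f, Complex.real_smul, Complex.ofReal_pow, ← Complex.mul_conj]; ring
  calc _ = ∑ i, ∑ j, ∑ k, ∑ l, ∑ θ : ι → Fin 4, f i j k l * (fourthRoot (θ i) *
          conj (fourthRoot (θ j)) * (fourthRoot (θ k) * conj (fourthRoot (θ l)))) := by
        simp only [hterm]
        rw [sum_comm]; refine sum_congr rfl fun i _ => ?_
        rw [sum_comm]; refine sum_congr rfl fun j _ => ?_
        rw [sum_comm]; exact sum_congr rfl fun k _ => sum_comm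
    _ = (4 ^ Fintype.card ι : ℕ) • ∑ i, ∑ j, ∑ k, ∑ l,
          (if (i = j ∧ k = l) ∨ (i = l ∧ k = j) then f i j k l else 0) := by
        simp only [← mul_sum, sum_fourthRoot_moment, mul_ite, mul_zero, smul_sum, smul_ite,
          smul_zero, nsmul_eq_mul, Nat.cast_pow, Nat.cast_ofNat]
        simp only [mul_comm]
    _ = _ := by
        rw [sum_ite_pair_eq_pair, sum_comm (f := fun i k => f i k k i)]
        simp only [hquad]
        simp only [hdiag, hcross, two_nsmul]

end Quartic

theorem neg_ge_of_two_mul_sub_sum_le {ι : Type*} [Fintype ι] {s D : ι → ℝ} {W κ : ℝ}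
    (hκ : 0 ≤ κ) (hD : ∀ i, D i ≤ -κ) (h : 2 * W - ∑ i, s i ^ 2 * D i ≤ -κ * (∑ i, s i) ^ 2) :
    -W ≥ (Fintype.card ι + 1) * κ / (2 * Fintype.card ι) * (∑ i, s i) ^ 2 := by
  obtain hι | hι := isEmpty_or_nonempty ι
  · simp only [univ_eq_empty, sum_empty] at h ⊢
    linarith
  have hsq : ∑ i, s i ^ 2 * D i ≤ -κ * ∑ i, s i ^ 2 := by
    rw [mul_sum]
    exact sum_le_sum fun i _ => by nlinarith [hD i, sq_nonneg (s i)]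
  have hcs : (∑ i, s i) ^ 2 ≤ Fintype.card ι * ∑ i, s i ^ 2 := sq_sum_le_card_mul_sum_sq
  have hcard : (0 : ℝ) < Fintype.card ι := by exact_mod_cast Fintype.card_pos
  rw [ge_iff_le, div_mul_eq_mul_div, div_le_iff₀ (by positivity)]
  nlinarith [mul_le_mul_of_nonneg_left hcs hκ]

theorem royden_average_le {ι E : Type*} [Fintype ι] [DecidableEq ι] [NormedAddCommGroup E]
    [InnerProductSpace ℂ E] {R : E → E → E → E → ℂ} (hR : IsSesquiQuadrilinear R)
    (hsym13 : ∀ ξ η ζ w, R ξ η ζ w = R ζ η ξ w) {κ : ℝ}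
    (hH : ∀ η, (R η η η η).re ≤ -κ * ‖η‖ ^ 4) {v : ι → E} (hv : Orthonormal ℂ v)
    {s : ι → ℝ} (hs : ∀ i, 0 ≤ s i) :
    2 * ∑ i, ∑ k, s i * s k * (R (v i) (v i) (v k) (v k)).re -
      ∑ i, s i ^ 2 * (R (v i) (v i) (v i) (v i)).re ≤ -κ * (∑ i, s i) ^ 2 := by
  set c : ι → ℂ := fun i => (√(s i) : ℂ)
  have hnormSq : ∀ i, Complex.normSq (c i) = s i := fun i => by
    simp only [c, Complex.normSq_ofReal, Real.mul_self_sqrt (hs i)]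
  have hnorm : ∀ θ, ‖phaseVector c v θ‖ ^ 2 = ∑ i, s i := fun θ => by
    simp only [phaseVector, hv.norm_sq_sum_smul, Complex.normSq_mul, hnormSq,
      Complex.normSq_eq_norm_sq (fourthRoot _), norm_fourthRoot, one_pow, mul_one]
  have havg := congrArg Complex.re (sum_quartic_phaseVector hR hsym13 c v)
  simp only [Complex.re_sum, Complex.smul_re, Complex.sub_re, hnormSq] at havg
  simp only [smul_eq_mul, nsmul_eq_mul, Nat.cast_pow, Nat.cast_ofNat] at havg
  have hbound : ∑ θ : ι → Fin 4,
      (R (phaseVector c v θ) (phaseVector c v θ) (phaseVector c v θ) (phaseVector c v θ)).re ≤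
        4 ^ Fintype.card ι * (-κ * (∑ i, s i) ^ 2) := by
    calc _ ≤ ∑ θ : ι → Fin 4, -κ * (∑ i, s i) ^ 2 :=
          sum_le_sum fun θ _ => (hH _).trans_eq (by rw [← hnorm θ]; ring)
      _ = _ := by simp
  exact le_of_mul_le_mul_left (havg ▸ hbound) (by positivity)

theorem royden_lemma_general (n : ℕ)
    (R : EuclideanSpace ℂ (Fin n) → EuclideanSpace ℂ (Fin n) → EuclideanSpace ℂ (Fin n) →
      EuclideanSpace ℂ (Fin n) → ℂ)
    (hlin1 : ∀ (a : ℂ) (ξ ξ' η ζ w), R (a • ξ + ξ') η ζ w = a * R ξ η ζ w + R ξ' η ζ w)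
    (hlin3 : ∀ (a : ℂ) (ξ η ζ ζ' w), R ξ η (a • ζ + ζ') w = a * R ξ η ζ w + R ξ η ζ' w)
    (hconj2 : ∀ (a : ℂ) (ξ η η' ζ w),
      R ξ (a • η + η') ζ w = (starRingEnd ℂ) a * R ξ η ζ w + R ξ η' ζ w)
    (hconj4 : ∀ (a : ℂ) (ξ η ζ w w'),
      R ξ η ζ (a • w + w') = (starRingEnd ℂ) a * R ξ η ζ w + R ξ η ζ w')
    (hsym13 : ∀ ξ η ζ w, R ξ η ζ w = R ζ η ξ w)
    (κ : ℝ) (hκ : 0 ≤ κ)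
    (hH : ∀ η : EuclideanSpace ℂ (Fin n), (R η η η η).re ≤ -κ * ‖η‖ ^ 4)
    (b : Fin n → ℝ) (hb : ∀ i, 0 < b i) :
    -∑ i, ∑ k, (R (EuclideanSpace.single i 1) (EuclideanSpace.single i 1)
          (EuclideanSpace.single k 1) (EuclideanSpace.single k 1)).re / (b i * b k)
      ≥ ((n + 1 : ℝ) * κ / (2 * n)) * (∑ i, 1 / b i) ^ 2 := by
  set e : Fin n → EuclideanSpace ℂ (Fin n) := fun i => EuclideanSpace.single i 1
  set s : Fin n → ℝ := fun i => 1 / b i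
  have he : Orthonormal ℂ e := EuclideanSpace.orthonormal_single
  have hdiag : ∀ i, (R (e i) (e i) (e i) (e i)).re ≤ -κ := fun i => by
    simpa [he.norm_eq_one] using hH (e i)
  have havg := royden_average_le ⟨hlin1, hconj2, hlin3, hconj4⟩ hsym13 hH he
    (s := s) fun i => (one_div_pos.2 (hb i)).le
  have hW : ∑ i, ∑ k, (R (e i) (e i) (e k) (e k)).re / (b i * b k) =
      ∑ i, ∑ k, s i * s k * (R (e i) (e i) (e k) (e k)).re :=
    sum_congr rfl fun i _ => sum_congr rfl fun k _ => by simp only [s]; ring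
  rw [hW]
  simpa only [Fintype.card_fin] using neg_ge_of_two_mul_sub_sum_le hκ hdiag havg

/-- Royden's lemma, algebraic form. Let `R` be a quadrilinear map on `ℂⁿ` (ℂ-linear in the
1st and 3rd slots, conjugate-linear in the 2nd and 4th) satisfying the Kähler curvature
symmetries `R(ξ,η,ζ,ω) = R(ζ,η,ξ,ω) = R(ξ,ω,ζ,η)` and the reality condition
`R(ξ,η,ζ,ω) = conj R(η,ξ,ω,ζ)`. If `R(η,η,η,η) ≤ -κ‖η‖⁴` for all `η` (with `κ ≥ 0`),
then for positive reals `b i`, with `S = ∑ 1/b i`,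
`-∑_{i,k} Re R(e_i,e_i,e_k,e_k)/(b_i b_k) ≥ ((n+1)κ/(2n)) S²`. -/
theorem royden_lemma (n : ℕ) (hn : 1 ≤ n)
    (R : EuclideanSpace ℂ (Fin n) → EuclideanSpace ℂ (Fin n) → EuclideanSpace ℂ (Fin n) →
      EuclideanSpace ℂ (Fin n) → ℂ)
    (hlin1 : ∀ (a : ℂ) (ξ ξ' η ζ w), R (a • ξ + ξ') η ζ w = a * R ξ η ζ w + R ξ' η ζ w)
    (hlin3 : ∀ (a : ℂ) (ξ η ζ ζ' w), R ξ η (a • ζ + ζ') w = a * R ξ η ζ w + R ξ η ζ' w)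
    (hconj2 : ∀ (a : ℂ) (ξ η η' ζ w),
      R ξ (a • η + η') ζ w = (starRingEnd ℂ) a * R ξ η ζ w + R ξ η' ζ w)
    (hconj4 : ∀ (a : ℂ) (ξ η ζ w w'),
      R ξ η ζ (a • w + w') = (starRingEnd ℂ) a * R ξ η ζ w + R ξ η ζ w')
    (hsym13 : ∀ ξ η ζ w, R ξ η ζ w = R ζ η ξ w)
    (hsym24 : ∀ ξ η ζ w, R ξ η ζ w = R ξ w ζ η)
    (hreal : ∀ ξ η ζ w, R ξ η ζ w = (starRingEnd ℂ) (R η ξ w ζ))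
    (κ : ℝ) (hκ : 0 ≤ κ)
    (hH : ∀ η : EuclideanSpace ℂ (Fin n), (R η η η η).re ≤ -κ * ‖η‖ ^ 4)
    (b : Fin n → ℝ) (hb : ∀ i, 0 < b i) :
    -∑ i, ∑ k, (R (EuclideanSpace.single i 1) (EuclideanSpace.single i 1)
          (EuclideanSpace.single k 1) (EuclideanSpace.single k 1)).re / (b i * b k)
      ≥ ((n + 1 : ℝ) * κ / (2 * n)) * (∑ i, 1 / b i) ^ 2 :=
  royden_lemma_general n R hlin1 hlin3 hconj2 hconj4 hsym13 κ hκ hH b hb
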